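/- arXiv:1508.07217 — 2 statements merged into one kernel-verified Lean document; each statement's English description precedes it below -/
import Mathlib

section
/- If an oriented graph G1 is obtained from an oriented graph G by pushing a set of vertices, then the anti-twinned graphs R(G) and R(G1) are isomorphic as oriented graphs. -/
/-- An oriented graph: a loopless digraph with no 2-cycles (arc relation is asymmetric). -/
structure OGraph (V : Type) where
  arc : V → V → Prop
  asymm : ∀ u v, arc u v → ¬ arc v u

namespace OGraph

/-- Pushing a set `S` of vertices reverses exactly the arcs with exactly one endpoint in `S`. -/
def push {V : Type} (G : OGraph V) (S : Set V) : OGraph V where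
  arc u v := (Xor (u ∈ S) (v ∈ S) ∧ G.arc v u) ∨ (¬ Xor (u ∈ S) (v ∈ S) ∧ G.arc u v)
  asymm := by
    intro u v h h'
    have h1 := G.asymm u v
    have h2 := G.asymm v u
    unfold Xor at h h'
    tauto

/-- Homomorphism of oriented graphs. -/
def IsHom {V W : Type} (G : OGraph V) (H : OGraph W) (f : V → W) : Prop :=
  ∀ u v, G.arc u v → H.arc (f u) (f v)

/-- Isomorphism of oriented graphs along an equivalence. -/
def IsIso {V W : Type} (G : OGraph V) (H : OGraph W) (e : V ≃ W) : Prop :=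
  ∀ u v, G.arc u v ↔ H.arc (e u) (e v)

/-- The anti-twinned graph `R(G)` on two copies of the vertices:
`inl` is the original copy, `inr` the pushed (primed) copy. -/
def antiTwin {V : Type} (G : OGraph V) : OGraph (V ⊕ V) where
  arc x y :=
    match x, y with
    | Sum.inl u, Sum.inl v => G.arc u v
    | Sum.inr u, Sum.inr v => G.arc u v
    | Sum.inl u, Sum.inr v => G.arc v u
    | Sum.inr u, Sum.inl v => G.arc v u
  asymm := by
    rintro (u | u) (v | v) h h' <;> exact G.asymm _ _ h h'

/-- The anti-twin of a vertex of `R(G)`: `x'` with `x'' = x`. -/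
def tw {V : Type} : V ⊕ V → V ⊕ V := Sum.elim Sum.inr Sum.inl

/-- `H` is an orientation of the simple graph `G`. -/
def IsOrientationOf {V : Type} (H : OGraph V) (G : SimpleGraph V) : Prop :=
  (∀ u v, H.arc u v → G.Adj u v) ∧ (∀ u v, G.Adj u v → H.arc u v ∨ H.arc v u)

end OGraph

/-- The directed 3-cycle. -/
def C3 : OGraph (Fin 3) where
  arc u v := v = u + 1
  asymm := by decide

/-
The swap `v ↔ v'` of the two copies of every `v ∈ S` is the required isomorphism.
Indeed `R(G₁)` is itself the push of `R(G)` by the set of all copies of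
vertices of `S`, and in `R(G)` exchanging a vertex with its twin reverses all its arcs,
so swapping a twin-closed set `T` has the same effect as pushing `T`.
-/

namespace OGraph

variable {V W : Type}

theorem ext_arc {G H : OGraph V} (h : G.arc = H.arc) : G = H := by
  cases G
  cases H
  subst h
  rfl

theorem push_arc_of_iff (G : OGraph V) {S : Set V} {u v : V} (h : u ∈ S ↔ v ∈ S) :
    (G.push S).arc u v ↔ G.arc u v := by
  simp [push, xor_iff_not_iff, h]

theorem push_arc_of_not_iff (G : OGraph V) {S : Set V} {u v : V} (h : ¬(u ∈ S ↔ v ∈ S)) :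
    (G.push S).arc u v ↔ G.arc v u := by
  simp only [push, xor_iff_not_iff, h]
  tauto

section Twist

variable (τ : W → W) (T : Set W) [DecidablePred (· ∈ T)]

def twistOn (x : W) : W := if x ∈ T then τ x else x

variable {τ T}

theorem twistOn_involutive (hτ : Function.Involutive τ) (hT : ∀ x, τ x ∈ T ↔ x ∈ T) :
    Function.Involutive (twistOn τ T) := by
  intro x
  by_cases hx : x ∈ T <;> simp [twistOn, hx, hT, hτ x]

theorem isIso_push_twistOn (H : OGraph W) (hτ : Function.Involutive τ)
    (harc : ∀ x y, H.arc (τ x) y ↔ H.arc y x) (hT : ∀ x, τ x ∈ T ↔ x ∈ T) :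
    H.IsIso (H.push T) (twistOn_involutive hτ hT).toPerm := by
  have harc' : ∀ x y, H.arc x (τ y) ↔ H.arc y x := fun x y => by
    rw [← harc, hτ]
  intro x y
  simp only [Function.Involutive.coe_toPerm, twistOn]
  by_cases hx : x ∈ T <;> by_cases hy : y ∈ T <;> simp only [hx, hy, if_true, if_false]
  · rw [push_arc_of_iff _ (by simp [hT, hx, hy]), harc, harc]
  · rw [push_arc_of_not_iff _ (by simp [hT, hx, hy]), harc']
  · rw [push_arc_of_not_iff _ (by simp [hT, hx, hy]), harc]
  · rw [push_arc_of_iff _ (by simp [hx, hy])]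

end Twist

theorem tw_involutive : Function.Involutive (tw : V ⊕ V → V ⊕ V) := by
  rintro (v | v) <;> rfl

theorem antiTwin_arc_tw_left (G : OGraph V) (x y : V ⊕ V) :
    G.antiTwin.arc (tw x) y ↔ G.antiTwin.arc y x := by
  rcases x with u | u <;> rcases y with v | v <;> rfl

theorem tw_mem_preimage_iff (S : Set V) (x : V ⊕ V) :
    tw x ∈ Sum.elim id id ⁻¹' S ↔ x ∈ Sum.elim id id ⁻¹' S := by
  rcases x with v | v <;> rfl

theorem antiTwin_push (G : OGraph V) (S : Set V) :
    (G.push S).antiTwin = G.antiTwin.push (Sum.elim id id ⁻¹' S) := by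
  refine ext_arc (funext₂ fun x y => propext ?_)
  rcases x with u | u <;> rcases y with v | v <;>
    simp only [antiTwin, push, Set.mem_preimage, Sum.elim_inl, Sum.elim_inr, id_eq, xor_comm]

end OGraph

/-- If `G₁` is obtained from `G` by pushing a set of vertices, then the
anti-twinned graphs `R(G)` and `R(G₁)` are isomorphic. -/
theorem antiTwin_iso_of_push {V : Type} (G G1 : OGraph V)
    (h : ∃ S : Set V, G1 = G.push S) :
    ∃ e : (V ⊕ V) ≃ (V ⊕ V), OGraph.IsIso G.antiTwin G1.antiTwin e := by
  classical
  obtain ⟨S, rfl⟩ := h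
  rw [OGraph.antiTwin_push]
  exact ⟨_, OGraph.isIso_push_twistOn G.antiTwin OGraph.tw_involutive
    (OGraph.antiTwin_arc_tw_left G) (OGraph.tw_mem_preimage_iff S)⟩
end

section
/- Let S = R(T) be a splitable oriented graph. Then an oriented graph G admits a homomorphism to S if and only if the push graph [G] admits a homomorphism to T (i.e., some graph obtained from G by pushing a vertex set admits a homomorphism to T). -/
/-!
A map `f : U → R(T)` is the same as a set `S ⊆ U` (the vertices sent to the primed copy)
together with a map `g : U → T` (forget the primes). An arc of `R(T)` keeps its direction in `T`
when both ends lie in the same copy and is reversed otherwise, which is exactly how pushing `S`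
acts on the arcs of `G`; so `f` is a homomorphism iff `g` is one from `G` pushed at `S`.
-/

namespace OGraph

variable {U V : Type}

open Classical in
theorem push_arc_iff (G : OGraph U) (S : Set U) (u v : U) :
    (G.push S).arc u v ↔ if (u ∈ S ↔ v ∈ S) then G.arc u v else G.arc v u := by
  unfold push Xor
  split_ifs <;> tauto

theorem antiTwin_arc_iff (T : OGraph V) (x y : V ⊕ V) :
    T.antiTwin.arc x y ↔ if (x.isRight ↔ y.isRight) then T.arc (x.elim id id) (y.elim id id)
      else T.arc (y.elim id id) (x.elim id id) := by
  rcases x with u | u <;> rcases y with v | v <;> simp [antiTwin]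

theorem isHom_antiTwin_iff (G : OGraph U) (T : OGraph V) (f : U → V ⊕ V) :
    G.IsHom T.antiTwin f ↔
      (G.push {u | (f u).isRight}).IsHom T (fun u => (f u).elim id id) := by
  classical
  constructor
  · intro hf u v huv
    simp only [push_arc_iff, Set.mem_ofPred_eq] at huv
    split_ifs at huv with hS
    · have hT := hf u v huv
      rwa [antiTwin_arc_iff, if_pos hS] at hT
    · have hT := hf v u huv
      rwa [antiTwin_arc_iff, if_neg (hS ∘ Iff.symm)] at hT
  · intro hf u v huv
    rw [antiTwin_arc_iff]
    split_ifs with hS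
    · refine hf u v ?_
      simp only [push_arc_iff, Set.mem_ofPred_eq]
      rwa [if_pos hS]
    · refine hf v u ?_
      simp only [push_arc_iff, Set.mem_ofPred_eq]
      rwa [if_neg (hS ∘ Iff.symm)]

end OGraph

/-- For a splitable graph `S = R(T)`, an oriented graph `G` admits a
homomorphism to `S` iff the push graph `[G]` admits a homomorphism to `T` (some push of
`G` maps homomorphically to `T`). -/
theorem hom_to_antiTwin_iff_push_hom {U V : Type} (G : OGraph U) (T : OGraph V) :
    (∃ f : U → V ⊕ V, OGraph.IsHom G T.antiTwin f) ↔
    (∃ (S : Set U) (f : U → V), OGraph.IsHom (G.push S) T f) := by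
  simp_rw [OGraph.isHom_antiTwin_iff]
  constructor
  · rintro ⟨f, hf⟩
    exact ⟨_, _, hf⟩
  · rintro ⟨S, g, hg⟩
    classical
    let f : U → V ⊕ V := fun u => if u ∈ S then .inr (g u) else .inl (g u)
    have hf_isRight : {u | (f u).isRight} = S := by
      ext u; by_cases hu : u ∈ S <;> simp [f, hu]
    have hf_elim : (fun u => (f u).elim id id) = g := by
      funext u; by_cases hu : u ∈ S <;> simp [f, hu]
    exact ⟨f, by rwa [hf_isRight, hf_elim]⟩
end
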